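/- arXiv:2411.11611 — 3 statements merged into one kernel-verified Lean document; each statement's English description precedes it below -/
import Mathlib

section
/- Let F be a field containing a primitive m-th root of unity γ_m, and S ⊆ Z_m with 0 ∈ S. If there is a subset B of the m-th roots of unity in F with |B| ≤ t having the 0-interpolation property for S, then there exists an S-decoding polynomial over F with at most t monomials. -/
/-!
Although `E` need not be linear, the interpolation property forces every coefficient sequence
`c` whose polynomial vanishes on `B` to have `c 0 = 0`. Hence the functional `c ↦ c 0` is a
linear combination `∑ b, e b • ev_b` of the evaluations at the points of `B`, i.e.
`∑ b, e b * b ^ s = [s = 0]` for `s ∈ S`. Writing each `b` as `γ ^ d b`, the polynomial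
`P(Z) = ∑ b, e b * Z ^ d b` has `P(γ ^ s) = ∑ b, e b * b ^ s`, so it is `S`-decoding with `|B|`
monomials.
-/

open Finset

def evalSupported {R : Type*} [CommSemiring R] (S : Finset ℕ) (x : R) : (ℕ → R) →ₗ[R] R where
  toFun c := ∑ s ∈ S, c s * x ^ s
  map_add' c c' := by simp only [Pi.add_apply, add_mul, sum_add_distrib]
  map_smul' a c := by simp only [Pi.smul_apply, smul_eq_mul, mul_assoc, mul_sum, RingHom.id_apply]

theorem exists_decoding_weights {F ι : Type*} [Field F] [Fintype ι] (x : ι → F) (S : Finset ℕ)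
    (E : (ι → F) → F) (hE : ∀ c : ℕ → F, E (fun i => ∑ s ∈ S, c s * x i ^ s) = c 0) :
    ∃ e : ι → F, ∀ s ∈ S, ∑ i, e i * x i ^ s = if s = 0 then 1 else 0 := by
  classical
  have hker : ⨅ i, LinearMap.ker (evalSupported S (x i)) ≤ LinearMap.ker (LinearMap.proj 0) := by
    intro c hc
    simp only [Submodule.mem_iInf, LinearMap.mem_ker] at hc
    have hE0 := hE 0
    simp only [Pi.zero_apply, zero_mul, sum_const_zero] at hE0
    rw [LinearMap.mem_ker, LinearMap.proj_apply, ← hE c, ← hE0]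
    exact congrArg E (funext hc)
  obtain ⟨e, he⟩ :=
    (Submodule.mem_span_range_iff_exists_fun F).1 (mem_span_of_iInf_ker_le_ker hker)
  refine ⟨e, fun s hs => ?_⟩
  simpa [evalSupported, Pi.single_apply, hs, eq_comm] using LinearMap.congr_fun he (Pi.single s 1)

theorem exists_fin_sum_monomials_eq {R ι : Type*} [CommSemiring R] [Fintype ι] {t : ℕ}
    (ht : Fintype.card ι ≤ t) (e : ι → R) (d : ι → ℕ) :
    ∃ (e' : Fin t → R) (d' : Fin t → ℕ), ∀ x : R, ∑ j, e' j * x ^ d' j = ∑ i, e i * x ^ d i := by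
  obtain ⟨φ⟩ := Function.Embedding.nonempty_of_card_le (ht.trans_eq (Fintype.card_fin t).symm)
  refine ⟨Function.extend φ e 0, Function.extend φ d 0, fun x => ?_⟩
  symm
  refine Fintype.sum_of_injective φ φ.injective _ _ (fun j hj => ?_) (fun i => ?_)
  · simp [Function.extend_apply' _ _ _ (fun ⟨i, hi⟩ => hj ⟨i, hi⟩)]
  · simp [φ.injective.extend_apply]

theorem stmt10 (F : Type*) [Field F] (m : ℕ) (γ : F)
    (hγ1 : γ ^ m = 1) (hγ2 : ∀ i, 1 ≤ i → i < m → γ ^ i ≠ 1)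
    (S : Finset ℕ) (hS : ∀ s ∈ S, s < m) (h0 : 0 ∈ S)
    (t : ℕ) (B : Finset F) (hB : ∀ b ∈ B, b ^ m = 1) (hcard : B.card ≤ t)
    (E : (B → F) → F)
    (hE : ∀ c : ℕ → F, E (fun b => ∑ s ∈ S, c s * (b : F) ^ s) = c 0) :
    ∃ (e : Fin t → F) (d : Fin t → ℕ),
      (∀ s ∈ S, s ≠ 0 → ∑ j, e j * (γ ^ s) ^ (d j) = 0) ∧
      ∑ j, e j * (1 : F) ^ (d j) = 1 := by
  have hm : 0 < m := hS 0 h0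
  have : NeZero m := ⟨hm.ne'⟩
  have hγ : IsPrimitiveRoot γ m := .mk_of_lt γ hm hγ1 fun i hi him => hγ2 i hi him
  choose d _ hd using fun b : B => hγ.eq_pow_of_pow_eq_one (hB b b.2)
  obtain ⟨e, he⟩ := exists_decoding_weights (fun b : B => (b : F)) S E hE
  obtain ⟨e', d', hsum⟩ := exists_fin_sum_monomials_eq (by simpa using hcard) e d
  refine ⟨e', d', fun s hs hs0 => ?_, ?_⟩
  · simp_rw [hsum, pow_right_comm γ s, hd, he s hs, if_neg hs0]
  · rw [hsum]
    simpa using he 0 h0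
end

section
/- Let p be prime, m coprime to p, M = mp, and φ: Z_m × Z_p → Z_M the Chinese remainder isomorphism. Let F be a field of characteristic p containing the set H_m of all m m-th roots of unity. Let 1 ≤ e ≤ p and suppose S_M ⊆ Z_M satisfies 0 ∈ S_M ⊆ φ(S_m × {0,1,...,e-1}) for some S_m ⊆ Z_m. If B ⊆ H_m has the 0-interpolation property for S_m, then B has the 0-interpolation property with multiplicity e for S_M: the order-e Hasse derivative evaluations (R^{(<e)}(b))_{b∈B} of any polynomial R(Z) = Σ_{s∈S_M} c_s Z^s determine c_0. -/
open Polynomial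

theorem stmt12 (p m : ℕ) [Fact p.Prime] (hpm : Nat.Coprime m p)
    (M : ℕ) (hM : M = m * p)
    (F : Type*) [Field F] [CharP F p] (γ : F) (hγ : IsPrimitiveRoot γ m)
    (e : ℕ) (he1 : 1 ≤ e) (he2 : e ≤ p)
    (Sm SM : Finset ℕ) (hSm : ∀ s ∈ Sm, s < m) (hSM : ∀ s ∈ SM, s < M)
    (h0 : 0 ∈ SM)
    (hsub : ∀ s ∈ SM, s % m ∈ Sm ∧ s % p < e)
    (B : Finset F) (hB : ∀ b ∈ B, b ^ m = 1)
    (E : (B → F) → F)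
    (hE : ∀ c : ℕ → F, E (fun b => ∑ s ∈ Sm, c s * (b : F) ^ s) = c 0) :
    ∃ E' : (B → Fin e → F) → F,
      ∀ c : ℕ → F,
        E' (fun b i =>
          (Polynomial.hasseDeriv (i : ℕ) (∑ s ∈ SM, C (c s) * X ^ s)).eval (b : F)) = c 0 := by
  refine ⟨fun D => E (fun b => ∑ i : Fin e, (-1 : F) ^ (i : ℕ) * (b : F) ^ (i : ℕ) * D b i), ?_⟩
  intro c
  set c' : ℕ → F := fun t => ∑ s ∈ SM.filter (fun s => s % p = 0 ∧ s % m = t), c s with hc'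
  have key : (fun b : B => ∑ i : Fin e, (-1 : F) ^ (i : ℕ) * (b : F) ^ (i : ℕ) *
      ((hasseDeriv (i : ℕ) (∑ s ∈ SM, C (c s) * X ^ s)).eval (b : F)))
      = fun b : B => ∑ s ∈ Sm, c' s * (b : F) ^ s := by
    funext b
    have hb : (b : F) ^ m = 1 := hB b b.2
    have hbmod : ∀ s : ℕ, (b : F) ^ s = (b : F) ^ (s % m) := by
      intro s
      conv_lhs => rw [← Nat.div_add_mod s m]
      rw [pow_add, pow_mul, hb, one_pow, one_mul]
    have hderiv : ∀ i : ℕ, (hasseDeriv i (∑ s ∈ SM, C (c s) * X ^ s)).eval (b : F)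
        = ∑ s ∈ SM, (Nat.choose s i : F) * c s * (b : F) ^ (s - i) := by
      intro i
      rw [map_sum, eval_finset_sum]
      refine Finset.sum_congr rfl fun s _ => ?_
      rw [C_mul_X_pow_eq_monomial, hasseDeriv_monomial, eval_monomial]
    simp only [hderiv, Finset.mul_sum]
    rw [Finset.sum_comm]
    have hinner : ∀ s ∈ SM, (∑ i : Fin e, (-1 : F) ^ (i : ℕ) * (b : F) ^ (i : ℕ) *
        ((Nat.choose s (i : ℕ) : F) * c s * (b : F) ^ (s - (i : ℕ))))
        = if s % p = 0 then c s * (b : F) ^ (s % m) else 0 := by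
      intro s hs
      have hje : s % p < e := (hsub s hs).2
      have hterm : ∀ i : Fin e, (-1 : F) ^ (i : ℕ) * (b : F) ^ (i : ℕ) *
          ((Nat.choose s (i : ℕ) : F) * c s * (b : F) ^ (s - (i : ℕ)))
          = c s * (b : F) ^ s * ((-1 : F) ^ (i : ℕ) * (Nat.choose (s % p) (i : ℕ) : F)) := by
        intro i
        have hip : (i : ℕ) < p := lt_of_lt_of_le i.2 he2
        have hlucas : ((Nat.choose s (i : ℕ) : F)) = (Nat.choose (s % p) (i : ℕ) : F) := by
          rw [CharP.natCast_eq_natCast F p]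
          have := Choose.choose_modEq_choose_mod_mul_choose_div_nat (p := p) (n := s) (k := (i : ℕ))
          simpa [Nat.mod_eq_of_lt hip, Nat.div_eq_of_lt hip] using this
        rcases le_or_gt (i : ℕ) s with h | h
        · rw [hlucas]
          have : (b : F) ^ (i : ℕ) * (b : F) ^ (s - (i : ℕ)) = (b : F) ^ s := by
            rw [← pow_add]; congr 1; omega
          calc (-1 : F) ^ (i : ℕ) * (b : F) ^ (i : ℕ) *
              ((Nat.choose (s % p) (i : ℕ) : F) * c s * (b : F) ^ (s - (i : ℕ)))
              = c s * ((b : F) ^ (i : ℕ) * (b : F) ^ (s - (i : ℕ))) *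
                ((-1 : F) ^ (i : ℕ) * (Nat.choose (s % p) (i : ℕ) : F)) := by ring
            _ = _ := by rw [this]
        · have h1 : Nat.choose s (i : ℕ) = 0 := Nat.choose_eq_zero_of_lt h
          have h2 : Nat.choose (s % p) (i : ℕ) = 0 :=
            Nat.choose_eq_zero_of_lt (lt_of_le_of_lt (Nat.mod_le s p) h)
          simp [h1, h2]
      rw [Finset.sum_congr rfl fun i _ => hterm i, ← Finset.mul_sum]
      have halt : (∑ i : Fin e, (-1 : F) ^ (i : ℕ) * (Nat.choose (s % p) (i : ℕ) : F))
          = if s % p = 0 then 1 else 0 := by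
        rw [Fin.sum_univ_eq_sum_range (fun i => (-1 : F) ^ i * (Nat.choose (s % p) i : F)) e]
        rw [← Finset.sum_subset (Finset.range_subset_range.mpr hje)
          (fun i _ hi => by
            have : s % p < i := by simp only [Finset.mem_range, not_lt] at hi ⊢; omega
            simp [Nat.choose_eq_zero_of_lt this])]
        have := Int.alternating_sum_range_choose (n := s % p)
        have hcast : (∑ i ∈ Finset.range (s % p + 1), (-1 : F) ^ i * (Nat.choose (s % p) i : F))
            = (((∑ i ∈ Finset.range (s % p + 1), (-1 : ℤ) ^ i * (Nat.choose (s % p) i : ℤ)) : ℤ) : F) := by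
          push_cast
          rfl
        rw [hcast, this]
        split_ifs <;> simp
      rw [halt]
      split_ifs with h
      · rw [mul_one, hbmod]
      · rw [mul_zero]
    rw [Finset.sum_congr rfl hinner, Finset.sum_ite, Finset.sum_const_zero, add_zero]
    -- now regroup the RHS
    have hmaps : ∀ x ∈ SM.filter (fun s => s % p = 0), x % m ∈ Sm :=
      fun x hx => (hsub x (Finset.mem_filter.mp hx).1).1
    have : ∀ t ∈ Sm, c' t * (b : F) ^ t
        = ∑ s ∈ (SM.filter (fun s => s % p = 0)).filter (fun s => s % m = t),
            c s * (b : F) ^ (s % m) := by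
      intro t _
      rw [hc', Finset.sum_mul, Finset.filter_filter]
      refine Finset.sum_congr rfl fun s hs => ?_
      have := (Finset.mem_filter.mp hs).2.2
      rw [this]
    rw [← Finset.sum_fiberwise_of_maps_to hmaps (fun s => c s * (b : F) ^ (s % m))]
    exact (Finset.sum_congr rfl this).symm
  show E (fun b => ∑ i : Fin e, (-1 : F) ^ (i : ℕ) * (b : F) ^ (i : ℕ) *
      ((hasseDeriv (i : ℕ) (∑ s ∈ SM, C (c s) * X ^ s)).eval (b : F))) = c 0
  rw [key, hE c']
  -- c' 0 = c 0
  have hfil : SM.filter (fun s => s % p = 0 ∧ s % m = 0) = {0} := by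
    ext s
    simp only [Finset.mem_filter, Finset.mem_singleton]
    constructor
    · rintro ⟨hs, hp0, hm0⟩
      have hdvd : m * p ∣ s := Nat.Coprime.mul_dvd_of_dvd_of_dvd hpm
        (Nat.dvd_of_mod_eq_zero hm0) (Nat.dvd_of_mod_eq_zero hp0)
      exact Nat.eq_zero_of_dvd_of_lt hdvd (hM ▸ hSM s hs)
    · rintro rfl
      exact ⟨h0, by simp, by simp⟩
  rw [hc']
  simp only [hfil, Finset.sum_singleton]
end

section
/- Let (u_i, v_i)_{i=1}^n be an S-matching vector family in Z_M^k × Z_M^k, i.e., ⟨u_i, v_i⟩ = 0 in Z_M for all i and ⟨u_i, v_j⟩ ∈ S \ {0} for i ≠ j, where 0 ∈ S ⊆ Z_M. Fix τ ∈ [n], coefficients a_1,...,a_n in a field F, and β ∈ F^k with all coordinates nonzero. Viewing u_i, v_τ as integer vectors with entries in {0,...,M-1}, define A(Z) = Σ_i a_i β^{u_i} Z^{⟨u_i, v_τ⟩} (integer inner products) and A₁(Z) = A(Z) mod (Z^M - 1). Then the constant coefficient of A₁ equals a_τ · β^{u_τ}. -/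
open Polynomial

lemma monic_XpowM {F : Type*} [Field F] {M : ℕ} (hM : 0 < M) :
    (X ^ M - 1 : F[X]).Monic := by
  simpa using Polynomial.monic_X_pow_sub_C (1 : F) hM.ne'

lemma key {F : Type*} [Field F] {M : ℕ} (hM : 0 < M) (c : F) (e : ℕ) :
    ((C c * X ^ e : F[X]) %ₘ (X ^ M - 1)) = C c * X ^ (e % M) := by
  have hmonic : (X ^ M - 1 : F[X]).Monic := monic_XpowM hM
  have hdvd : (X ^ M - 1 : F[X]) ∣ (C c * X ^ e - C c * X ^ (e % M)) := by
    have h1 : (X ^ M - 1 : F[X]) ∣ (X ^ M) ^ (e / M) - 1 ^ (e / M) :=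
      sub_dvd_pow_sub_pow _ _ _
    have h2 : (X ^ M - 1 : F[X]) ∣ X ^ (M * (e / M)) - 1 := by
      simpa [← pow_mul] using h1
    have heq : C c * X ^ e - C c * X ^ (e % M)
        = C c * X ^ (e % M) * (X ^ (M * (e / M)) - 1) := by
      have he : e = e % M + M * (e / M) := (Nat.mod_add_div e M).symm
      nth_rewrite 1 [he]
      rw [pow_add]
      ring
    rw [heq]
    exact Dvd.dvd.mul_left h2 _
  have hsub : (C c * X ^ e - C c * X ^ (e % M)) %ₘ (X ^ M - 1) = 0 :=
    (Polynomial.modByMonic_eq_zero_iff_dvd hmonic).mpr hdvd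
  rw [Polynomial.sub_modByMonic] at hsub
  have hself : (C c * X ^ (e % M) : F[X]) %ₘ (X ^ M - 1) = C c * X ^ (e % M) := by
    apply (Polynomial.modByMonic_eq_self_iff hmonic).mpr
    have hdeg : (X ^ M - 1 : F[X]).degree = M := by
      simpa using Polynomial.degree_X_pow_sub_C hM (1 : F)
    rw [hdeg]
    calc (C c * X ^ (e % M) : F[X]).degree ≤ (X ^ (e % M) : F[X]).degree := by
          rcases eq_or_ne c 0 with h | h
          · simp [h]
          · simp [Polynomial.degree_C_mul (a := c) h]
      _ < (M : WithBot ℕ) := by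
          rw [Polynomial.degree_X_pow]
          exact_mod_cast Nat.mod_lt e hM
  rw [hself] at hsub
  exact sub_eq_zero.mp hsub

theorem stmt18 (F : Type*) [Field F] (M : ℕ) (hM : 0 < M) (n k : ℕ)
    (S : Finset ℕ) (hS : ∀ s ∈ S, s < M) (h0 : 0 ∈ S)
    (u v : Fin n → Fin k → ℕ)
    (hu : ∀ i j, u i j < M) (hv : ∀ i j, v i j < M)
    (hdiag : ∀ i, (∑ j, u i j * v i j) % M = 0)
    (hoff : ∀ i i', i ≠ i' →
      (∑ j, u i j * v i' j) % M ∈ S ∧ (∑ j, u i j * v i' j) % M ≠ 0)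
    (a : Fin n → F) (β : Fin k → F) (hβ : ∀ j, β j ≠ 0) (τ : Fin n) :
    ((∑ i, C (a i * ∏ j, β j ^ (u i j)) * X ^ (∑ j, u i j * v τ j) : F[X])
        %ₘ (X ^ M - 1)).coeff 0
      = a τ * ∏ j, β j ^ (u τ j) := by
  have hmonic : (X ^ M - 1 : F[X]).Monic := monic_XpowM hM
  have hsum : (∑ i, C (a i * ∏ j, β j ^ (u i j)) * X ^ (∑ j, u i j * v τ j) : F[X])
      %ₘ (X ^ M - 1)
      = ∑ i, C (a i * ∏ j, β j ^ (u i j)) * X ^ ((∑ j, u i j * v τ j) % M) := by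
    have hmap := map_sum (Polynomial.modByMonicHom (X ^ M - 1 : F[X]))
      (fun i : Fin n => C (a i * ∏ j, β j ^ (u i j)) * X ^ (∑ j, u i j * v τ j)) Finset.univ
    simp only [Polynomial.modByMonicHom_apply] at hmap
    rw [hmap]
    exact Finset.sum_congr rfl fun i _ => key hM _ _
  rw [hsum, Polynomial.finset_sum_coeff]
  rw [Finset.sum_eq_single τ]
  · rw [hdiag τ, pow_zero, mul_one, Polynomial.coeff_C_zero]
  · intro i _ hi
    have := (hoff i τ hi).2
    simp [Polynomial.coeff_C_mul, Polynomial.coeff_X_pow, Ne.symm this, this]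
  · intro h; exact absurd (Finset.mem_univ τ) h
end
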